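/- Let T be a tree of order n ≥ 4 with metric dimension ε(T). Then the second Zagreb index satisfies M₂(T) ≥ 4n + ε(T) − 9, with equality when T is the path P_n. -/

import Mathlib

open scoped Classical

/-- Degree of a vertex. -/
noncomputable def deg {V : Type*} [Fintype V] (G : SimpleGraph V) (v : V) : ℕ :=
  (Finset.univ.filter (fun u => G.Adj v u)).card

/-- First Zagreb index: sum of squares of degrees. -/
noncomputable def M1 {V : Type*} [Fintype V] (G : SimpleGraph V) : ℕ :=
  ∑ v, (deg G v) ^ 2

/-- Second Zagreb index: sum over edges of products of endpoint degrees. -/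
noncomputable def M2 {V : Type*} [Fintype V] (G : SimpleGraph V) : ℕ :=
  ∑ e ∈ G.edgeFinset,
    Sym2.lift ⟨fun u v => deg G u * deg G v, fun u v => Nat.mul_comm _ _⟩ e

/-- Atom-bond connectivity index. -/
noncomputable def ABC {V : Type*} [Fintype V] (G : SimpleGraph V) : ℝ :=
  ∑ e ∈ G.edgeFinset,
    Sym2.lift ⟨fun u v =>
      Real.sqrt (((deg G u : ℝ) + (deg G v : ℝ) - 2) / ((deg G u : ℝ) * (deg G v : ℝ))),
      fun u v => by dsimp only; rw [add_comm ((deg G u : ℝ)), mul_comm ((deg G u : ℝ))]⟩ e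

/-- A set of vertices is resolving if every pair of distinct vertices is
distinguished by its distance to some member of the set. -/
def IsResolving {V : Type*} [Fintype V] (G : SimpleGraph V) (S : Finset V) : Prop :=
  ∀ u v : V, u ≠ v → ∃ s ∈ S, G.dist u s ≠ G.dist v s

/-- The metric dimension: minimum size of a resolving set. -/
noncomputable def metricDim {V : Type*} [Fintype V] (G : SimpleGraph V) : ℕ :=
  sInf {k | ∃ S : Finset V, IsResolving G S ∧ S.card = k}

/-- The star graph on `n` vertices: vertex `0` is adjacent to all others. -/
def starGraph (n : ℕ) : SimpleGraph (Fin n) where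
  Adj u v := u ≠ v ∧ (u.val = 0 ∨ v.val = 0)
  symm := by constructor; intro u v h; exact ⟨h.1.symm, h.2.symm⟩
  loopless := ⟨fun v h => h.1 rfl⟩

/-!
Write `d v` for degrees and `L` for the number of leaves. Put `g v = d v - 2 - [d v = 1]`.
On every edge `uv` one has `d u * d v - 4 ≥ g u + g v`, and summing over edges gives
`M₂ - 4|E| ≥ ∑ᵥ d v * g v`. The vertex-wise bound `d (d - 2 - [d = 1]) ≥ 3 (d - 2) + [d = 1]`
together with the handshake lemma turns this into `M₂ + 6n ≥ 10|E| + L`, i.e.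
`M₂ ≥ 4n + L - 10` for a tree.

In a tree, for `u ≠ v` a vertex farthest from `v` among those whose geodesic from `v` passes
through `u` is a leaf closer to `u` than to `v`. Hence for two distinct vertices some leaf
separates them in each direction, so all leaves but one form a resolving set: `ε ≤ L - 1`.

For the path both inequalities are equalities: `M₂(Pₙ) = 4n - 8` and `L = 2` force `ε = 1`.
-/

namespace SimpleGraph

open Finset

variable {V W : Type*} [Fintype V] [Fintype W]

noncomputable def leaves (G : SimpleGraph V) : Finset V :=
  univ.filter fun v => deg G v = 1

lemma mem_leaves {G : SimpleGraph V} {v : V} : v ∈ G.leaves ↔ deg G v = 1 := by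
  simp [leaves]

lemma deg_eq_degree (G : SimpleGraph V) (v : V) : deg G v = G.degree v := by
  rw [deg, ← card_neighborFinset_eq_degree, neighborFinset_eq_filter]

lemma one_le_deg_of_adj {G : SimpleGraph V} {u v : V} (h : G.Adj u v) : 1 ≤ deg G u :=
  card_pos.2 ⟨v, by simpa using h⟩

namespace Iso

variable {G : SimpleGraph V} {H : SimpleGraph W} (e : G ≃g H)
include e

lemma deg_eq (v : V) : deg H (e v) = deg G v := by
  simp only [deg_eq_degree, ← card_neighborSet_eq_degree]
  exact Fintype.card_congr (e.mapNeighborSet v).symm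

lemma card_leaves_eq : #H.leaves = #G.leaves :=
  (card_equiv e.toEquiv fun v => by simp [mem_leaves, e.deg_eq]).symm

lemma M2_eq : M2 G = M2 H := by
  refine sum_nbij' (Sym2.map e) (Sym2.map e.symm) ?_ ?_ ?_ ?_ ?_ <;>
    rintro ⟨u, v⟩ <;> simp [e.deg_eq, e.map_adj_iff, e.symm.map_adj_iff]

end Iso

section Darts

variable (G : SimpleGraph V) {M : Type*} [AddCommMonoid M]

lemma sum_darts_fst (f : V → M) : ∑ d : G.Dart, f d.fst = ∑ v, G.degree v • f v := by
  rw [← sum_fiberwise_of_maps_to (t := univ) (g := fun d : G.Dart => d.fst) fun _ _ => mem_univ _]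
  refine sum_congr rfl fun v _ => ?_
  rw [sum_congr rfl (g := fun _ => f v) fun d hd => by rw [(mem_filter.1 hd).2], sum_const]
  congr 1
  convert G.dart_fst_fiber_card_eq_degree v

lemma sum_edgeFinset_lift_add (f : V → M) :
    ∑ e ∈ G.edgeFinset, Sym2.lift ⟨fun u v => f u + f v, fun _ _ => add_comm _ _⟩ e =
      ∑ v, G.degree v • f v := by
  rw [← sum_darts_fst, ← sum_fiberwise_of_maps_to (t := G.edgeFinset) (g := Dart.edge)
    fun d _ => mem_edgeFinset.2 d.edge_mem]
  refine sum_congr rfl fun e he => ?_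
  induction e using Sym2.ind with
  | h u v =>
    let d : G.Dart := ⟨(u, v), mem_edgeFinset.1 he⟩
    rw [show univ.filter (fun d' : G.Dart => d'.edge = s(u, v)) = {d, d.symm} from d.edge_fiber,
      sum_pair d.symm_ne.symm]
    rfl

end Darts

theorem ten_mul_card_edgeFinset_add_card_leaves_le (G : SimpleGraph V) :
    10 * #G.edgeFinset + #G.leaves ≤ M2 G + 6 * Fintype.card V := by
  set d : V → ℤ := fun v => deg G v
  set leaf : V → ℤ := fun v => if deg G v = 1 then 1 else 0
  set g : V → ℤ := fun v => d v - 2 - leaf v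
  have hedge : ∀ e ∈ G.edgeFinset,
      Sym2.lift ⟨fun u v => g u + g v, fun _ _ => add_comm _ _⟩ e + 4 ≤
        Sym2.lift ⟨fun u v => d u * d v, fun _ _ => mul_comm _ _⟩ e := by
    rintro ⟨u, v⟩ he
    have huv : G.Adj u v := mem_edgeFinset.1 he
    have hu := one_le_deg_of_adj huv
    have hv := one_le_deg_of_adj huv.symm
    simp only [Sym2.lift_mk, g, d, leaf]
    split_ifs with h₁ h₂ h₂ <;> push_cast [*]
    · linarith
    · linarith
    · nlinarith [(by omega : (2 : ℤ) ≤ deg G u), (by omega : (2 : ℤ) ≤ deg G v)]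
  have hvert : ∀ v, 3 * (d v - 2) + leaf v ≤ d v * g v := by
    intro v
    simp only [g, d, leaf]
    split_ifs with h
    · simp [h]
    · nlinarith [sq_nonneg ((deg G v : ℤ) - 2)]
  have hM2 : (M2 G : ℤ) =
      ∑ e ∈ G.edgeFinset, Sym2.lift ⟨fun u v => d u * d v, fun _ _ => mul_comm _ _⟩ e := by
    rw [M2, Nat.cast_sum]
    refine sum_congr rfl ?_
    rintro ⟨u, v⟩ -
    simp [d]
  have hvert_sum : ∑ v, (3 * (d v - 2) + leaf v) =
      6 * #G.edgeFinset - 6 * Fintype.card V + #G.leaves := by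
    have hhandshake : ∑ v, d v = 2 * #G.edgeFinset := by
      simp only [d, deg_eq_degree]
      exact_mod_cast G.sum_degrees_eq_twice_card_edges
    have hleaves : ∑ v, leaf v = #G.leaves := by
      simp [leaf, leaves, sum_boole]
    rw [sum_add_distrib, ← mul_sum, sum_sub_distrib, hhandshake, hleaves, sum_const, card_univ,
      nsmul_eq_mul]
    ring
  have hedge_sum : ∑ v, d v * g v + 4 * #G.edgeFinset =
      ∑ e ∈ G.edgeFinset,
        (Sym2.lift ⟨fun u v => g u + g v, fun _ _ => add_comm _ _⟩ e + 4) := by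
    rw [sum_add_distrib, sum_edgeFinset_lift_add, sum_const, nsmul_eq_mul, mul_comm _ (4 : ℤ)]
    simp only [d, deg_eq_degree, nsmul_eq_mul]
  suffices (10 * #G.edgeFinset + #G.leaves : ℤ) ≤ M2 G + 6 * Fintype.card V by
    exact_mod_cast this
  calc (10 * #G.edgeFinset + #G.leaves : ℤ)
      = ∑ v, (3 * (d v - 2) + leaf v) + 4 * #G.edgeFinset + 6 * Fintype.card V := by
        rw [hvert_sum]; ring
    _ ≤ ∑ v, d v * g v + 4 * #G.edgeFinset + 6 * Fintype.card V := by
        gcongr with v; exact hvert v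
    _ ≤ M2 G + 6 * Fintype.card V := by
        rw [hedge_sum, hM2]; gcongr with e he; exact hedge e he

section Trees

variable {G : SimpleGraph V}

theorem IsTree.four_mul_card_add_card_leaves_le (hG : G.IsTree) :
    4 * Fintype.card V + #G.leaves ≤ M2 G + 10 := by
  have := G.ten_mul_card_edgeFinset_add_card_leaves_le
  have := hG.card_edgeFinset
  omega

lemma IsTree.deg_eq_one_of_forall_adj_dist_lt (hG : G.IsTree) {r x : V} (hxr : x ≠ r)
    (h : ∀ z, G.Adj x z → G.dist r z < G.dist r x) : deg G x = 1 := by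
  classical
  obtain ⟨q, hq, hqlen⟩ := hG.connected.exists_path_of_dist r x
  have hq_nil : ¬q.Nil := Walk.not_nil_of_ne hxr.symm
  refine card_eq_one.2 ⟨q.penultimate, eq_singleton_iff_unique_mem.2
    ⟨by simpa using (q.adj_penultimate hq_nil).symm, fun z hz => ?_⟩⟩
  have hxz : G.Adj x z := by simpa using hz
  obtain ⟨p, hp, hplen⟩ := hG.connected.exists_path_of_dist r z
  have hzq : z ∈ q.support := by
    by_contra hzq
    have hxp := hG.isAcyclic.mem_support_of_ne_mem_support_of_adj_of_isPath hp hq hxz.symm hzq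
    have := (dist_le (p.takeUntil x hxp)).trans (p.length_takeUntil_le_length hxp)
    have := h z hxz
    omega
  exact hG.isAcyclic.eq_penultimate_of_adj_end hq hxz hzq

lemma IsTree.exists_leaf_dist_lt (hG : G.IsTree) {u v : V} (huv : u ≠ v) :
    ∃ x, deg G x = 1 ∧ G.dist u x < G.dist v x := by
  have hconn := hG.connected
  have hvu : 0 < G.dist v u := hconn.pos_dist_of_ne huv.symm
  -- the filter selects the `x` with `u` on a geodesic from `v` to `x`
  obtain ⟨x, hx, hmax⟩ := (univ.filter fun x => G.dist v u + G.dist u x ≤ G.dist v x)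
    |>.exists_max_image (G.dist v) ⟨u, by simp⟩
  simp only [mem_filter, mem_univ, true_and] at hx hmax
  have hxv : x ≠ v := by rintro rfl; rw [dist_self] at hx; omega
  refine ⟨x, hG.deg_eq_one_of_forall_adj_dist_lt hxv fun z hxz => ?_, by omega⟩
  have := hconn.dist_triangle (u := u) (v := x) (w := z)
  rw [dist_eq_one_iff_adj.2 hxz] at this
  rcases hG.dist_eq_dist_add_one_of_adj v hxz with h | h
  · omega
  · have := hmax z (by omega)
    omega

lemma IsTree.isResolving_leaves_erase (hG : G.IsTree) (ℓ : V) :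
    IsResolving G (G.leaves.erase ℓ) := by
  intro u v huv
  obtain ⟨x, hx, hux⟩ := hG.exists_leaf_dist_lt huv
  obtain ⟨y, hy, hvy⟩ := hG.exists_leaf_dist_lt huv.symm
  have hxy : x ≠ y := by rintro rfl; omega
  by_cases hxℓ : x = ℓ
  · exact ⟨y, mem_erase.2 ⟨hxℓ ▸ hxy.symm, mem_leaves.2 hy⟩, hvy.ne'⟩
  · exact ⟨x, mem_erase.2 ⟨hxℓ, mem_leaves.2 hx⟩, hux.ne⟩

lemma IsTree.metricDim_lt_card_leaves [Nontrivial V] (hG : G.IsTree) :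
    metricDim G < #G.leaves := by
  obtain ⟨u, v, huv⟩ := exists_pair_ne V
  obtain ⟨ℓ, hℓ, -⟩ := hG.exists_leaf_dist_lt huv
  calc metricDim G ≤ #(G.leaves.erase ℓ) :=
        Nat.sInf_le ⟨_, hG.isResolving_leaves_erase ℓ, rfl⟩
    _ < #G.leaves := card_erase_lt_of_mem (mem_leaves.2 hℓ)

lemma metricDim_pos [Nontrivial V] {S : Finset V} (hS : IsResolving G S) : 0 < metricDim G := by
  obtain ⟨S₀, hS₀, hcard⟩ := Nat.sInf_mem
    (⟨_, S, hS, rfl⟩ : {k | ∃ S : Finset V, IsResolving G S ∧ #S = k}.Nonempty)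
  obtain ⟨u, v, huv⟩ := exists_pair_ne V
  obtain ⟨s, hs, -⟩ := hS₀ u v huv
  rw [metricDim, ← hcard]
  exact card_pos.2 ⟨s, hs⟩

end Trees

lemma deg_pathGraph {n : ℕ} (i : Fin n) :
    deg (pathGraph n) i = (if 0 < i.val then 1 else 0) + (if i.val + 1 < n then 1 else 0) := by
  have hsplit : univ.filter (fun j => (pathGraph n).Adj i j) =
      univ.filter (fun j : Fin n => j.val + 1 = i.val) ∪
        univ.filter (fun j : Fin n => j.val = i.val + 1) := by
    ext j
    simp only [mem_filter, mem_univ, true_and, mem_union, pathGraph_adj]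
    omega
  rw [deg, hsplit, card_union_of_disjoint (disjoint_filter.2 fun _ _ h₁ h₂ => by omega)]
  congr 1
  · split_ifs with h
    · refine card_eq_one.2 ⟨⟨i.val - 1, by omega⟩, ?_⟩
      ext j
      simp only [mem_filter, mem_univ, true_and, mem_singleton, Fin.ext_iff]
      omega
    · exact card_eq_zero.2 (filter_eq_empty_iff.2 fun j _ => by omega)
  · split_ifs with h
    · refine card_eq_one.2 ⟨⟨i.val + 1, h⟩, ?_⟩
      ext j
      simp only [mem_filter, mem_univ, true_and, mem_singleton, Fin.ext_iff]
    · exact card_eq_zero.2 (filter_eq_empty_iff.2 fun j _ => by omega)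

lemma card_leaves_pathGraph {n : ℕ} (hn : 2 ≤ n) : #(pathGraph n).leaves = 2 := by
  have : (pathGraph n).leaves = {⟨0, by omega⟩, ⟨n - 1, by omega⟩} := by
    ext i
    simp only [mem_leaves, deg_pathGraph, mem_insert, mem_singleton, Fin.ext_iff]
    split_ifs <;> omega
  rw [this, card_pair (by simp [Fin.ext_iff]; omega)]

lemma M2_pathGraph {n : ℕ} (hn : 3 ≤ n) : M2 (pathGraph n) + 8 = 4 * n := by
  set δ : ℕ → ℕ := fun a => (if 0 < a then 1 else 0) + (if a + 1 < n then 1 else 0)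
  have hsum : M2 (pathGraph n) = ∑ a ∈ range (n - 1), δ a * δ (a + 1) := by
    symm
    refine sum_bij (fun a ha => s(⟨a, by grind⟩, ⟨a + 1, by grind⟩)) ?_ ?_ ?_ ?_
    · intro a ha
      simp [pathGraph_adj]
    · intro a ha b hb hab
      simp only [Sym2.eq_iff, Fin.ext_iff] at hab
      omega
    · rintro ⟨x, y⟩ he
      rcases pathGraph_adj.1 (mem_edgeFinset.1 he) with h | h
      · exact ⟨x, by grind, by simp [h]⟩
      · exact ⟨y, by grind, by simp [Fin.ext_iff, h]⟩
    · intro a ha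
      simp [deg_pathGraph, δ]
  obtain ⟨m, rfl⟩ : ∃ m, n = m + 3 := ⟨n - 3, by omega⟩
  have hmid : ∀ a ∈ range m, δ (a + 1) * δ (a + 1 + 1) = 4 := by
    intro a ha
    simp only [mem_range] at ha
    simp [δ, ha, ha.le]
  rw [hsum, show m + 3 - 1 = m + 1 + 1 by omega, sum_range_succ, sum_range_succ',
    sum_congr rfl hmid]
  simp only [sum_const, card_range, smul_eq_mul, δ]
  split_ifs <;> omega

end SimpleGraph

theorem stmt14 {V : Type*} [Fintype V] (T : SimpleGraph V) (hT : T.IsTree)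
    (hn : 4 ≤ Fintype.card V) :
    4 * Fintype.card V + metricDim T - 9 ≤ M2 T ∧
      (Nonempty (T ≃g SimpleGraph.pathGraph (Fintype.card V)) →
        M2 T = 4 * Fintype.card V + metricDim T - 9) := by
  have : Nontrivial V := Fintype.one_lt_card_iff_nontrivial.1 (by omega)
  have hdim := hT.metricDim_lt_card_leaves
  have hM2 := hT.four_mul_card_add_card_leaves_le
  refine ⟨by omega, fun ⟨e⟩ => ?_⟩
  have hleaves : T.leaves.card = 2 :=
    e.card_leaves_eq ▸ SimpleGraph.card_leaves_pathGraph (by omega)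
  have hdim_pos := SimpleGraph.metricDim_pos (hT.isResolving_leaves_erase (Classical.arbitrary V))
  have hpath := e.M2_eq ▸ SimpleGraph.M2_pathGraph (by omega)
  omega
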